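/- arXiv:1404.2609 — 5 statements merged into one kernel-verified Lean document; each statement's English description precedes it below -/
import Mathlib

section
/- Let b, c ∈ R and θ ∈ R, ε ∈ {±1}. Set a' = sin(2θ)·b + sin²θ·c, b' = ε(cos(2θ)·b + (1/2)·sin(2θ)·c), c' = cos(2θ)·c − 2sin(2θ)·b. Define the symmetric bilinear form g on R² by g(v₁,v₁)=1, g(v₁,v₂) = −c/2, g(v₂,v₂) = 4b² + (5/4)c², and the form g' by g'(w₁,w₁)=1, g'(w₁,w₂) = −c'/2, g'(w₂,w₂) = 4b'² + (5/4)c'², where w₁ = v₁ and w₂ = a'·v₁ + v₂. Then g = g' as bilinear forms, i.e., g(w_i, w_j) computed via bilinearity from g on v₁, v₂ equals g'(w_i, w_j) for all i, j. -/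
/-!
The frame change is `a' = (c - c') / 2`, and `(2b', c')` is `(2b, c)` rotated by `2θ` (up to the
sign `ε`), so `4b² + c²` is invariant. Expanding the old form in the new frame gives
`1`, `a' - c/2` and `a'² - a'c + 4b² + (5/4)c²`, which these two facts turn into
`1`, `-c'/2` and `4b'² + (5/4)c'²`.
-/

open Matrix

theorem dotProduct_mulVec_shear {R : Type*} [CommRing R] (p q a : R) :
    ![1, 0] ⬝ᵥ (!![1, p; p, q] *ᵥ ![1, 0]) = 1 ∧
    ![1, 0] ⬝ᵥ (!![1, p; p, q] *ᵥ ![a, 1]) = a + p ∧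
    ![a, 1] ⬝ᵥ (!![1, p; p, q] *ᵥ ![a, 1]) = a ^ 2 + 2 * a * p + q := by
  refine ⟨?_, ?_, ?_⟩ <;> simp [dotProduct, mulVec, Fin.sum_univ_two]
  ring

theorem sq_add_sq_rotate {R : Type*} [CommRing R] {C S ε : R} (hCS : C ^ 2 + S ^ 2 = 1)
    (hε : ε ^ 2 = 1) (x y : R) :
    (ε * (C * x + S * y)) ^ 2 + (C * y - S * x) ^ 2 = x ^ 2 + y ^ 2 := by
  linear_combination (x ^ 2 + y ^ 2) * hCS + (C * x + S * y) ^ 2 * hε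

/-- Frame independence of the transversal metric `g⊥`: under the change of transversal
frame `w₁ = v₁`, `w₂ = a'·v₁ + v₂` induced by a rotation of the orthonormal tangent frame,
the bilinear form with matrix `[[1, -c/2],[-c/2, 4b² + (5/4)c²]]` transforms into the one
given by the same formulas in the new coefficients `(b', c')`. -/
theorem stmt5 (b c θ ε : ℝ) (hε : ε = 1 ∨ ε = -1)
    (a' b' c' : ℝ)
    (ha' : a' = Real.sin (2 * θ) * b + (Real.sin θ) ^ 2 * c)
    (hb' : b' = ε * (Real.cos (2 * θ) * b + (1 / 2) * Real.sin (2 * θ) * c))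
    (hc' : c' = Real.cos (2 * θ) * c - 2 * Real.sin (2 * θ) * b)
    (M M' : Matrix (Fin 2) (Fin 2) ℝ)
    (hM : M = !![1, -c / 2; -c / 2, 4 * b ^ 2 + (5 / 4) * c ^ 2])
    (hM' : M' = !![1, -c' / 2; -c' / 2, 4 * b' ^ 2 + (5 / 4) * c' ^ 2])
    (w1 w2 : Fin 2 → ℝ) (hw1 : w1 = ![1, 0]) (hw2 : w2 = ![a', 1]) :
    dotProduct w1 (M.mulVec w1) = M' 0 0 ∧
    dotProduct w1 (M.mulVec w2) = M' 0 1 ∧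
    dotProduct w2 (M.mulVec w2) = M' 1 1 := by
  have ha'_eq : a' = (c - c') / 2 := by
    rw [ha', hc', Real.sin_sq_eq_half_sub]
    ring
  have hnorm : 4 * b' ^ 2 + c' ^ 2 = 4 * b ^ 2 + c ^ 2 := by
    have hε_sq : ε ^ 2 = 1 := by rcases hε with rfl | rfl <;> norm_num
    rw [hb', hc']
    linear_combination sq_add_sq_rotate (Real.cos_sq_add_sin_sq (2 * θ)) hε_sq (2 * b) c
  obtain ⟨h11, h12, h22⟩ := dotProduct_mulVec_shear (-c / 2) (4 * b ^ 2 + (5 / 4) * c ^ 2) a'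
  subst hM hM' hw1 hw2
  refine ⟨h11, ?_, ?_⟩
  · rw [h12, ha'_eq]
    simp only [of_apply, cons_val', cons_val_zero, cons_val_one, empty_val', cons_val_fin_one]
    ring
  · rw [h22, ha'_eq]
    simp only [of_apply, cons_val', cons_val_one, empty_val', cons_val_fin_one]
    linear_combination -hnorm
end

section
/- Let λ₁, λ₂, λ₃, λ₄ and μ₁, μ₂, μ₃, μ₄ be real numbers with λ₂ = λ₃ and μ₂ = μ₃, and let (b, c) ∈ R² with (b, c) ≠ (0, 0). Suppose (λ₄ − λ₁)·b = λ₂·c and (μ₄ − μ₁)·b = μ₂·c. Then (λ₄ − λ₁)·μ₂ − (μ₄ − μ₁)·λ₂ = 0; consequently there exists (α, β) ≠ (0,0) such that α·[[λ₁,λ₂],[λ₃,λ₄]] + β·[[μ₁,μ₂],[μ₃,μ₄]] is a scalar multiple of the identity matrix. -/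
/-!
Both `(l4 - l1, l2)` and `(m4 - m1, m2)` are orthogonal to the nonzero vector `(b, -c)` of the
plane, so they are linearly dependent: their determinant vanishes. Since the shape operators are
symmetric, a combination `α S₁ + β S₂` is scalar exactly when `(α, β)` kills the off-diagonal
entries `(l2, m2)` and the diagonal gaps `(l4 - l1, m4 - m1)`; the vanishing determinant says
that the matrix with these rows is singular, which provides such a nonzero `(α, β)`.
-/

section

variable {R : Type*} [CommRing R]

theorem mul_sub_mul_eq_zero_of_mul_eq_mul [NoZeroDivisors R] {x y x' y' b c : R}
    (hbc : (b, c) ≠ (0, 0)) (h : x * b = y * c) (h' : x' * b = y' * c) :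
    x * y' - x' * y = 0 := by
  have hb : (x * y' - x' * y) * b = 0 := by linear_combination y' * h - y * h'
  have hc : (x * y' - x' * y) * c = 0 := by linear_combination x' * h - x * h'
  by_contra hD
  exact hbc (Prod.ext ((mul_eq_zero.mp hb).resolve_left hD) ((mul_eq_zero.mp hc).resolve_left hD))

theorem exists_ne_zero_mul_add_mul_eq_zero [IsDomain R] {p q r s : R} (h : p * s - q * r = 0) :
    ∃ α β : R, (α, β) ≠ (0, 0) ∧ α * p + β * q = 0 ∧ α * r + β * s = 0 := by
  have hdet : (!![p, q; r, s] : Matrix (Fin 2) (Fin 2) R).det = 0 := by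
    rwa [Matrix.det_fin_two_of]
  obtain ⟨v, hv, hMv⟩ := Matrix.exists_mulVec_eq_zero_iff.mpr hdet
  refine ⟨v 0, v 1, fun h01 => hv ?_, ?_, ?_⟩
  · ext i
    fin_cases i
    · exact congrArg Prod.fst h01
    · exact congrArg Prod.snd h01
  · simpa [Matrix.vecHead, Matrix.vecTail, mul_comm] using congrFun hMv 0
  · simpa [Matrix.vecHead, Matrix.vecTail, mul_comm] using congrFun hMv 1

theorem smul_add_smul_fin_two_eq_smul_one {α β l1 l2 l3 l4 m1 m2 m3 m4 : R}
    (h2 : α * l2 + β * m2 = 0) (h3 : α * l3 + β * m3 = 0)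
    (h4 : α * (l4 - l1) + β * (m4 - m1) = 0) :
    α • !![l1, l2; l3, l4] + β • !![m1, m2; m3, m4] =
      (α * l1 + β * m1) • (1 : Matrix (Fin 2) (Fin 2) R) := by
  ext i j
  fin_cases i <;> fin_cases j
  · simp
  · simpa using h2
  · simpa using h3
  · have h4' : α * l4 + β * m4 = α * l1 + β * m1 := by linear_combination h4
    simpa using h4'

end

/-- Algebraic core of the normal-curvature theorem: if both self-adjoint shape operators
satisfy the vanishing conditions of `R_∇⊥` at a non-inflection point `((b,c) ≠ (0,0))`,
then the point is σ-semiumbilic. -/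
theorem stmt8 (l1 l2 l3 l4 m1 m2 m3 m4 b c : ℝ)
    (hl : l2 = l3) (hm : m2 = m3) (hbc : (b, c) ≠ (0, 0))
    (h1 : (l4 - l1) * b = l2 * c) (h2 : (m4 - m1) * b = m2 * c) :
    (l4 - l1) * m2 - (m4 - m1) * l2 = 0 ∧
    ∃ α β : ℝ, (α, β) ≠ (0, 0) ∧ ∃ k : ℝ,
      α • (!![l1, l2; l3, l4] : Matrix (Fin 2) (Fin 2) ℝ) +
        β • (!![m1, m2; m3, m4] : Matrix (Fin 2) (Fin 2) ℝ) =
      k • (1 : Matrix (Fin 2) (Fin 2) ℝ) := by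
  subst hl hm
  have hdet : (l4 - l1) * m2 - (m4 - m1) * l2 = 0 :=
    mul_sub_mul_eq_zero_of_mul_eq_mul hbc h1 h2
  obtain ⟨α, β, hαβ, hoff, hdiag⟩ :=
    exists_ne_zero_mul_add_mul_eq_zero (p := l2) (q := m2) (r := l4 - l1) (s := m4 - m1)
      (by linear_combination -hdet)
  exact ⟨hdet, α, β, hαβ, _, smul_add_smul_fin_two_eq_smul_one hoff hoff hdiag⟩
end

section
/- Let λ₁,...,λ₄, μ₁,...,μ₄ ∈ R with λ₂ = λ₃, μ₂ = μ₃, and let (b, c) ≠ (0,0). The binary quadratic form −(αλ₂ + βμ₂)x² − (α(λ₄−λ₁) + β(μ₄−μ₁))xy + (αλ₂ + βμ₂)y² is proportional to the form −b·x² − c·xy + b·y² for all (α, β) if and only if b(λ₄ − λ₁) − cλ₂ = 0 and b(μ₄ − μ₁) − cμ₂ = 0. -/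
/-! A form `-p x² - q xy + p y²` is determined by the vector `(p, q)`, so two such forms are
proportional exactly when their coefficient vectors are, i.e. when `b q - c p = 0`. The condition
is linear in `(α, β)`, so it holds for all `(α, β)` iff it holds for `(1, 0)` and `(0, 1)`. -/

section

variable {K : Type*} [Field K] [LinearOrder K] [IsStrictOrderedRing K]

theorem exists_forall_tracelessForm_eq_mul_iff {p q b c : K} (hbc : (b, c) ≠ (0, 0)) :
    (∃ t : K, ∀ x y : K,
      -p * x ^ 2 - q * x * y + p * y ^ 2 = t * (-(b * x ^ 2) - c * x * y + b * y ^ 2)) ↔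
    b * q - c * p = 0 := by
  constructor
  · rintro ⟨t, ht⟩
    have hp := ht 1 0
    have hq := ht 1 1
    linear_combination c * hp - b * hq
  · intro h
    have hnorm : b * b + c * c ≠ 0 := by
      intro h0
      obtain ⟨rfl, rfl⟩ := mul_self_add_mul_self_eq_zero.mp h0
      exact hbc rfl
    -- `(p, q)` is its own orthogonal projection onto the line through `(b, c)`.
    obtain ⟨t, rfl, rfl⟩ : ∃ t, p = t * b ∧ q = t * c := by
      refine ⟨(b * p + c * q) / (b * b + c * c), ?_, ?_⟩ <;>
        rw [div_mul_eq_mul_div, eq_div_iff hnorm]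
      · linear_combination -c * h
      · linear_combination b * h
    exact ⟨t, fun x y => by ring⟩

end

/-- The ν-principal configurations all agree with the asymptotic configuration iff
`b(λ₄−λ₁) − cλ₂ = 0` and `b(μ₄−μ₁) − cμ₂ = 0`. -/
theorem stmt10 (l1 l2 l4 m1 m2 m4 b c : ℝ) (hbc : (b, c) ≠ (0, 0)) :
    (∀ α β : ℝ, ∃ t : ℝ, ∀ x y : ℝ,
      -(α * l2 + β * m2) * x ^ 2 - (α * (l4 - l1) + β * (m4 - m1)) * x * y +
        (α * l2 + β * m2) * y ^ 2 =
      t * (-(b * x ^ 2) - c * x * y + b * y ^ 2)) ↔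
    (b * (l4 - l1) - c * l2 = 0 ∧ b * (m4 - m1) - c * m2 = 0) := by
  simp only [exists_forall_tracelessForm_eq_mul_iff hbc]
  constructor
  · intro h
    exact ⟨by linear_combination h 1 0, by linear_combination h 0 1⟩
  · rintro ⟨hl, hm⟩ α β
    linear_combination α * hl + β * hm
end

section
/- Let M be the surface in R⁴ parameterized by X(u,v) = (u, v, g(u,v), (1/2)(u² + v² + g(u,v)²)) for a smooth function g. Then with the transversal field ξ(u,v) = −√(1 + g_u² + g_v²)·(0, 0, 1, g(u,v)), the metric of the transversal field satisfies g_ξ(X_u, X_u) = 1 + g_u², g_ξ(X_u, X_v) = g_u g_v, and g_ξ(X_v, X_v) = 1 + g_v²; i.e., g_ξ equals the restriction to M of the Blaschke metric of the elliptic paraboloid x₄ = (1/2)(x₁² + x₂² + x₃²). -/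
lemma vec4_ext {a b c d a' b' c' d' : ℝ} (h1 : a = a') (h2 : b = b')
    (h3 : c = c') (h4 : d = d') : ![a, b, c, d] = ![a', b', c', d'] := by
  subst h1 h2 h3 h4; rfl

lemma det4 (a α b β c d e f : ℝ) :
    (Matrix.of ![![1,0,a,α], ![0,1,b,β], ![0,0,c,d], ![0,0,e,f]]).det = c*f - d*e := by
  simp [Matrix.det_succ_row_zero, Fin.sum_univ_succ]
  ring

lemma dsq (g : ℝ × ℝ → ℝ) (p w : ℝ × ℝ) (hg : DifferentiableAt ℝ g p) :
    fderiv ℝ (fun q : ℝ × ℝ => (1/2)*(q.1^2+q.2^2+g q^2)) p w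
      = w.1*p.1 + w.2*p.2 + g p * fderiv ℝ g p w := by
  have key := (((hasFDerivAt_fst.mul hasFDerivAt_fst).add
      (hasFDerivAt_snd.mul hasFDerivAt_snd)).add
      (hg.hasFDerivAt.mul hg.hasFDerivAt)).const_mul (1/2 : ℝ)
  simp only [pow_two]
  erw [key.fderiv]
  simp [ContinuousLinearMap.add_apply, ContinuousLinearMap.smul_apply]
  ring

lemma dX (g : ℝ × ℝ → ℝ) (hg : Differentiable ℝ g) (p w : ℝ × ℝ) :
    fderiv ℝ (fun q : ℝ × ℝ => ![q.1, q.2, g q, (1/2)*(q.1^2+q.2^2+g q^2)]) p w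
      = ![w.1, w.2, fderiv ℝ g p w, w.1*p.1+w.2*p.2+g p*fderiv ℝ g p w] := by
  have hdiff : ∀ i, DifferentiableAt ℝ
      (fun q : ℝ × ℝ => ![q.1, q.2, g q, (1/2)*(q.1^2+q.2^2+g q^2)] i) p := by
    intro i
    refine Fin.cases ?_ (fun j => Fin.cases ?_ (fun k => Fin.cases ?_
      (fun l => Fin.cases ?_ (fun m => m.elim0) l) k) j) i <;>
      simp only [Matrix.cons_val_zero, Matrix.cons_val_succ] <;> fun_prop
  rw [fderiv_pi hdiff]
  funext i
  rw [ContinuousLinearMap.pi_apply]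
  refine Fin.cases ?_ (fun j => Fin.cases ?_ (fun k => Fin.cases ?_
    (fun l => Fin.cases ?_ (fun m => m.elim0) l) k) j) i <;>
    simp only [Matrix.cons_val_zero, Matrix.cons_val_succ]
  · exact congrFun (congrArg _ fderiv_fst) w
  · exact congrFun (congrArg _ fderiv_snd) w
  · exact dsq g p w (hg p)

lemma dlinmul (l : ℝ × ℝ →L[ℝ] ℝ) (f h : ℝ × ℝ → ℝ) (p w : ℝ × ℝ)
    (hf : DifferentiableAt ℝ f p) (hh : DifferentiableAt ℝ h p) :
    fderiv ℝ (fun q : ℝ × ℝ => l q + f q * h q) p w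
      = l w + h p * fderiv ℝ f p w + f p * fderiv ℝ h p w := by
  have key := (l.hasFDerivAt (x := p)).add (hf.hasFDerivAt.mul hh.hasFDerivAt)
  erw [key.fderiv]
  simp [ContinuousLinearMap.add_apply, ContinuousLinearMap.smul_apply]
  ring

lemma dtan (c₁ c₂ : ℝ) (l : ℝ × ℝ →L[ℝ] ℝ) (f h : ℝ × ℝ → ℝ) (p w : ℝ × ℝ)
    (hf : DifferentiableAt ℝ f p) (hh : DifferentiableAt ℝ h p) :
    fderiv ℝ (fun q : ℝ × ℝ => ![c₁, c₂, h q, l q + f q * h q]) p w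
      = ![0, 0, fderiv ℝ h p w, l w + h p * fderiv ℝ f p w + f p * fderiv ℝ h p w] := by
  have hdiff : ∀ i, DifferentiableAt ℝ
      (fun q : ℝ × ℝ => ![c₁, c₂, h q, l q + f q * h q] i) p := by
    intro i
    refine Fin.cases ?_ (fun j => Fin.cases ?_ (fun k => Fin.cases ?_
      (fun l' => Fin.cases ?_ (fun m => m.elim0) l') k) j) i <;>
      simp only [Matrix.cons_val_zero, Matrix.cons_val_succ]
    · exact differentiableAt_const _
    · exact differentiableAt_const _
    · exact hh
    · exact (l.differentiable p).add (hf.mul hh)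
  rw [fderiv_pi hdiff]
  funext i
  rw [ContinuousLinearMap.pi_apply]
  refine Fin.cases ?_ (fun j => Fin.cases ?_ (fun k => Fin.cases ?_
    (fun l' => Fin.cases ?_ (fun m => m.elim0) l') k) j) i <;>
    simp only [Matrix.cons_val_zero, Matrix.cons_val_succ]
  · simp [fderiv_const]
  · simp [fderiv_const]
  · exact dlinmul l f h p w hf hh

/-- For a surface in the elliptic paraboloid `x₄ = (1/2)(x₁²+x₂²+x₃²)` parameterized by
`X(u,v) = (u, v, g, (1/2)(u²+v²+g²))`, with transversal field
`ξ = −√(1+g_u²+g_v²)·(0,0,1,g)`, the metric of the transversal field is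
`g_ξ(X_u,X_u) = 1+g_u²`, `g_ξ(X_u,X_v) = g_u g_v`, `g_ξ(X_v,X_v) = 1+g_v²`,
i.e. the restriction of the Blaschke metric of the paraboloid. -/
theorem stmt12 (g : ℝ × ℝ → ℝ) (hg : ContDiff ℝ (⊤ : ℕ∞) g)
    (X : ℝ × ℝ → Fin 4 → ℝ)
    (hX : ∀ u v : ℝ, X (u, v) = ![u, v, g (u, v), (1 / 2) * (u ^ 2 + v ^ 2 + g (u, v) ^ 2)])
    (Xu Xv Xuu Xuv Xvv : ℝ × ℝ → Fin 4 → ℝ)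
    (hXu : ∀ p, Xu p = fderiv ℝ X p (1, 0))
    (hXv : ∀ p, Xv p = fderiv ℝ X p (0, 1))
    (hXuu : ∀ p, Xuu p = fderiv ℝ Xu p (1, 0))
    (hXuv : ∀ p, Xuv p = fderiv ℝ Xu p (0, 1))
    (hXvv : ∀ p, Xvv p = fderiv ℝ Xv p (0, 1))
    (gu gv : ℝ × ℝ → ℝ)
    (hgu : ∀ p, gu p = fderiv ℝ g p (1, 0))
    (hgv : ∀ p, gv p = fderiv ℝ g p (0, 1))
    (ξ : ℝ × ℝ → Fin 4 → ℝ)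
    (hξ : ∀ p, ξ p = (-Real.sqrt (1 + gu p ^ 2 + gv p ^ 2)) • ![0, 0, 1, g p])
    (G : (ℝ × ℝ → Fin 4 → ℝ) → ℝ × ℝ → ℝ)
    (hG : ∀ Y p, G Y p = (Matrix.of ![Xu p, Xv p, Y p, ξ p]).det)
    (detG : ℝ × ℝ → ℝ)
    (hdetG : ∀ p, detG p = G Xuu p * G Xvv p - (G Xuv p) ^ 2)
    (p : ℝ × ℝ) :
    G Xuu p / detG p ^ ((1 : ℝ) / 4) = 1 + gu p ^ 2 ∧
    G Xuv p / detG p ^ ((1 : ℝ) / 4) = gu p * gv p ∧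
    G Xvv p / detG p ^ ((1 : ℝ) / 4) = 1 + gv p ^ 2 := by
  have hgd : Differentiable ℝ g := hg.differentiable (by simp)
  have hgufun : gu = fun q => fderiv ℝ g q (1, 0) := funext hgu
  have hgvfun : gv = fun q => fderiv ℝ g q (0, 1) := funext hgv
  have hguc : ContDiff ℝ (⊤ : ℕ∞) gu := by
    rw [hgufun]; exact (hg.fderiv_right (by simp)).clm_apply contDiff_const
  have hgvc : ContDiff ℝ (⊤ : ℕ∞) gv := by
    rw [hgvfun]; exact (hg.fderiv_right (by simp)).clm_apply contDiff_const
  have hgud : Differentiable ℝ gu := hguc.differentiable (by simp)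
  have hgvd : Differentiable ℝ gv := hgvc.differentiable (by simp)
  have hXfun : X = fun q : ℝ × ℝ => ![q.1, q.2, g q, (1/2)*(q.1^2+q.2^2+g q^2)] := by
    funext q; rcases q with ⟨u, v⟩; exact hX u v
  have hXu' : ∀ q, Xu q = ![1, 0, gu q, q.1 + g q * gu q] := by
    intro q
    rw [hXu, hXfun, dX g hgd q (1, 0)]
    exact vec4_ext rfl rfl (hgu q).symm (by rw [← hgu q]; ring)
  have hXv' : ∀ q, Xv q = ![0, 1, gv q, q.2 + g q * gv q] := by
    intro q
    rw [hXv, hXfun, dX g hgd q (0, 1)]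
    exact vec4_ext rfl rfl (hgv q).symm (by rw [← hgv q]; ring)
  have hXufun : Xu = fun q : ℝ × ℝ =>
      ![1, 0, gu q, (ContinuousLinearMap.fst ℝ ℝ ℝ) q + g q * gu q] := by
    funext q; rw [hXu' q]; rfl
  have hXvfun : Xv = fun q : ℝ × ℝ =>
      ![0, 1, gv q, (ContinuousLinearMap.snd ℝ ℝ ℝ) q + g q * gv q] := by
    funext q; rw [hXv' q]; rfl
  set A := fderiv ℝ gu p (1, 0) with hA
  set B := fderiv ℝ gu p (0, 1) with hB
  set C := fderiv ℝ gv p (0, 1) with hC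
  have hXuu' : Xuu p = ![0, 0, A, 1 + gu p * gu p + g p * A] := by
    rw [hXuu, hXufun, dtan 1 0 (ContinuousLinearMap.fst ℝ ℝ ℝ) g gu p (1, 0) (hgd p) (hgud p)]
    exact vec4_ext rfl rfl rfl (by rw [← hgu p]; simp [hA])
  have hXuv' : Xuv p = ![0, 0, B, gu p * gv p + g p * B] := by
    rw [hXuv, hXufun, dtan 1 0 (ContinuousLinearMap.fst ℝ ℝ ℝ) g gu p (0, 1) (hgd p) (hgud p)]
    exact vec4_ext rfl rfl rfl (by rw [← hgv p]; simp [hB])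
  have hXvv' : Xvv p = ![0, 0, C, 1 + gv p * gv p + g p * C] := by
    rw [hXvv, hXvfun, dtan 0 1 (ContinuousLinearMap.snd ℝ ℝ ℝ) g gv p (0, 1) (hgd p) (hgvd p)]
    exact vec4_ext rfl rfl rfl (by rw [← hgv p]; simp [hC])
  set s := Real.sqrt (1 + gu p ^ 2 + gv p ^ 2) with hs
  have hξ' : ξ p = ![0, 0, -s, -s * g p] := by
    rw [hξ p]
    funext i
    refine Fin.cases ?_ (fun j => Fin.cases ?_ (fun k => Fin.cases ?_
      (fun l' => Fin.cases ?_ (fun m => m.elim0) l') k) j) i <;>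
      simp [Matrix.cons_val_zero, Matrix.cons_val_succ, hs]
  have hGuu : G Xuu p = s * (1 + gu p ^ 2) := by
    rw [hG, hXu' p, hXv' p, hXuu', hξ', det4]; ring
  have hGuv : G Xuv p = s * (gu p * gv p) := by
    rw [hG, hXu' p, hXv' p, hXuv', hξ', det4]; ring
  have hGvv : G Xvv p = s * (1 + gv p ^ 2) := by
    rw [hG, hXu' p, hXv' p, hXvv', hξ', det4]; ring
  have hs2 : s ^ 2 = 1 + gu p ^ 2 + gv p ^ 2 := Real.sq_sqrt (by positivity)
  have hspos : 0 < s := Real.sqrt_pos.mpr (by positivity)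
  have hdet : detG p = s ^ 4 := by
    rw [hdetG, hGuu, hGuv, hGvv]
    have : s * (1 + gu p ^ 2) * (s * (1 + gv p ^ 2)) - (s * (gu p * gv p)) ^ 2
        = s ^ 2 * (1 + gu p ^ 2 + gv p ^ 2) := by ring
    rw [this, ← hs2]; ring
  have hpow : detG p ^ ((1 : ℝ) / 4) = s := by
    rw [hdet, show (1 : ℝ) / 4 = ((4 : ℕ) : ℝ)⁻¹ by norm_num]
    exact Real.pow_rpow_inv_natCast hspos.le (by norm_num)
  refine ⟨?_, ?_, ?_⟩ <;> rw [hpow]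
  · rw [hGuu, mul_comm, mul_div_assoc, div_self hspos.ne', mul_one]
  · rw [hGuv, mul_comm, mul_div_assoc, div_self hspos.ne', mul_one]
  · rw [hGvv, mul_comm, mul_div_assoc, div_self hspos.ne', mul_one]
end

section
/- Let α, β : R → R² be plane curves parameterized by affine arc length (so det(α', α'') = 1 and det(β', β'') = 1), and let M ⊂ R⁴ be parameterized by X(u,v) = (α₁(u), α₂(u), β₁(v), β₂(v)). With the transversal field ξ = (0, 1/α₁'(u), 0, −1/β₁'(v)), the metric of the transversal field satisfies g_ξ(X_u, X_u) = 1, g_ξ(X_u, X_v) = 0, g_ξ(X_v, X_v) = 1. -/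
/-- For a product of two plane curves parameterized by affine arc length,
`X(u,v) = (α₁(u), α₂(u), β₁(v), β₂(v))`, with transversal field
`ξ = (0, 1/α₁'(u), 0, −1/β₁'(v))`, the metric of the transversal field satisfies
`g_ξ(X_u,X_u) = 1`, `g_ξ(X_u,X_v) = 0`, `g_ξ(X_v,X_v) = 1`. -/
theorem stmt13 (α1 α2 β1 β2 : ℝ → ℝ)
    (hα1 : ContDiff ℝ (⊤ : ℕ∞) α1) (hα2 : ContDiff ℝ (⊤ : ℕ∞) α2)
    (hβ1 : ContDiff ℝ (⊤ : ℕ∞) β1) (hβ2 : ContDiff ℝ (⊤ : ℕ∞) β2)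
    (harcα : ∀ t, deriv α1 t * deriv (deriv α2) t - deriv α2 t * deriv (deriv α1) t = 1)
    (harcβ : ∀ t, deriv β1 t * deriv (deriv β2) t - deriv β2 t * deriv (deriv β1) t = 1)
    (u v : ℝ) (hα1' : deriv α1 u ≠ 0) (hβ1' : deriv β1 v ≠ 0)
    (Xu Xv Xuu Xuv Xvv ξ : Fin 4 → ℝ)
    (hXu : Xu = ![deriv α1 u, deriv α2 u, 0, 0])
    (hXv : Xv = ![0, 0, deriv β1 v, deriv β2 v])
    (hXuu : Xuu = ![deriv (deriv α1) u, deriv (deriv α2) u, 0, 0])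
    (hXuv : Xuv = 0)
    (hXvv : Xvv = ![0, 0, deriv (deriv β1) v, deriv (deriv β2) v])
    (hξ : ξ = ![0, 1 / deriv α1 u, 0, -(1 / deriv β1 v)])
    (G : (Fin 4 → ℝ) → ℝ)
    (hG : ∀ Y, G Y = (Matrix.of ![Xu, Xv, Y, ξ]).det)
    (detG : ℝ)
    (hdetG : detG = G Xuu * G Xvv - (G Xuv) ^ 2) :
    G Xuu / detG ^ ((1 : ℝ) / 4) = 1 ∧
    G Xuv / detG ^ ((1 : ℝ) / 4) = 0 ∧
    G Xvv / detG ^ ((1 : ℝ) / 4) = 1 := by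
  have h1 : G Xuu = 1 := by
    rw [hG, hXu, hXv, hXuu, hξ]
    simp [Matrix.det_succ_row_zero, Fin.sum_univ_succ, Matrix.det_fin_three, Fin.succAbove]
    field_simp
    linear_combination harcα u
  have h2 : G Xuv = 0 := by
    rw [hG, hXuv]
    have : (Matrix.of ![Xu, Xv, (0 : Fin 4 → ℝ), ξ]) 2 = 0 := rfl
    rw [Matrix.det_eq_zero_of_row_eq_zero 2 (fun j => congrFun this j)]
  have h3 : G Xvv = 1 := by
    rw [hG, hXu, hXv, hXvv, hξ]
    simp [Matrix.det_succ_row_zero, Fin.sum_univ_succ, Matrix.det_fin_three, Fin.succAbove]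
    field_simp
    linear_combination harcβ v
  have hd : detG = 1 := by rw [hdetG, h1, h2, h3]; ring
  rw [h1, h2, h3, hd, Real.one_rpow]
  norm_num
end
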